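/- arXiv:1706.08314 — 6 statements merged into one kernel-verified Lean document; each statement's English description precedes it below -/
import Mathlib

section
/- With the setup of the Dirichlet principle, define the trace form approximations by Ě_λ[Ju] := E_λ[P_λ u] for u ∈ dom J. Then for 0 < λ ≤ μ one has Ě_λ[Ju] ≤ Ě_μ[Ju] for all u ∈ dom J, i.e., the family (Ě_λ)_{λ>0} is monotone increasing in λ. -/
open Filter Topology RealInnerProductSpace

/-- With the setup of the Dirichlet principle, the approximating trace
forms `Ě_lam[J u] := E_lam[P_lam u]` are monotone increasing in `lam`: if
`0 < lam ≤ mu`, `p = P_lam u` and `q = P_mu u` (each characterized as the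
`E_lam`- resp. `E_mu`-orthogonal projection of `u` onto the orthogonal complement of
`ker J`), then `E_lam[p] ≤ E_mu[q]`. -/
theorem stmt2 {D Haux : Type*} [NormedAddCommGroup D] [InnerProductSpace ℝ D] [CompleteSpace D]
    [NormedAddCommGroup Haux] [InnerProductSpace ℝ Haux]
    (E : D →ₗ[ℝ] D →ₗ[ℝ] ℝ)
    (hsymm : ∀ u v : D, E u v = E v u) (hpos : ∀ u : D, 0 ≤ E u u)
    (hEclosed : ∀ u : ℕ → D, (∀ ε > (0 : ℝ), ∃ N, ∀ m ≥ N, ∀ n ≥ N,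
        E (u m - u n) (u m - u n) + ‖u m - u n‖ ^ 2 < ε) →
        ∃ x : D, Tendsto (fun n => E (u n - x) (u n - x) + ‖u n - x‖ ^ 2) atTop (𝓝 0))
    (domJ : Submodule ℝ D) (J : domJ →ₗ[ℝ] Haux)
    (hJclosed : ∀ (w : ℕ → domJ) (x : D) (y : Haux),
        Tendsto (fun n => E ((w n : D) - x) ((w n : D) - x) + ‖(w n : D) - x‖ ^ 2) atTop (𝓝 0) →
        Tendsto (fun n => J (w n)) atTop (𝓝 y) →
        ∃ hx : x ∈ domJ, J ⟨x, hx⟩ = y)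
    (lam mu : ℝ) (hlam : 0 < lam) (hlammu : lam ≤ mu)
    (u : domJ)
    (p : D) (hp : p ∈ domJ) (hJp : J ⟨p, hp⟩ = J u)
    (hperp : ∀ v : domJ, J v = 0 → E p (v : D) + lam * ⟪p, (v : D)⟫ = 0)
    (q : D) (hq : q ∈ domJ) (hJq : J ⟨q, hq⟩ = J u)
    (hqerp : ∀ v : domJ, J v = 0 → E q (v : D) + mu * ⟪q, (v : D)⟫ = 0) :
    E p p + lam * ‖p‖ ^ 2 ≤ E q q + mu * ‖q‖ ^ 2 := by
  have hv : J (⟨q, hq⟩ - ⟨p, hp⟩ : domJ) = 0 := by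
    rw [map_sub, hJp, hJq, sub_self]
  have h0 := hperp _ hv
  have hcoe : (((⟨q, hq⟩ - ⟨p, hp⟩ : domJ) : D)) = q - p := rfl
  rw [hcoe] at h0
  have hE : E q q = E p p + 2 * E p (q - p) + E (q - p) (q - p) := by
    simp only [map_sub, LinearMap.sub_apply]
    rw [hsymm q p]; ring
  have hN : ‖q‖ ^ 2 = ‖p‖ ^ 2 + 2 * ⟪p, q - p⟫ + ‖q - p‖ ^ 2 := by
    have h1 : ⟪p, q - p⟫ = ⟪p, q⟫ - ⟪p, p⟫ := inner_sub_right p q p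
    have h2 : ‖q - p‖ ^ 2 = ‖q‖ ^ 2 - 2 * ⟪q, p⟫ + ‖p‖ ^ 2 := norm_sub_sq_real q p
    have h3 : ⟪p, q⟫ = ⟪q, p⟫ := real_inner_comm q p
    have h4 : ⟪p, p⟫ = ‖p‖ ^ 2 := real_inner_self_eq_norm_sq p
    linarith
  have hpos1 := hpos (q - p)
  have hn1 : (0:ℝ) ≤ ‖q - p‖ ^ 2 := sq_nonneg _
  have hn2 : (0:ℝ) ≤ ‖q‖ ^ 2 := sq_nonneg _
  nlinarith [mul_nonneg hlam.le hn1, mul_nonneg (sub_nonneg.2 hlammu) hn2]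
end

section
/- For any fixed β > 0 and every u ∈ dom J, the limit lim_{λ↓0} Ě_{β+λ}[Ju] equals Ě_β[Ju]; that is, the approximating trace forms are consistent: the trace of E_β constructed via the shifted approximation agrees with Ě_β itself. -/
open Filter Topology

/-- Nonnegative slopes make the infimum monotone in `t ≥ 0`, which gives the lower bound; the upper
bound comes from a single near-minimiser `i`, whose affine function is continuous at `t = 0`. -/
theorem tendsto_sInf_image_add_mul_nhdsGT {ι : Type*} {s : Set ι} {a b : ι → ℝ}
    (hs : s.Nonempty) (ha : BddBelow (a '' s)) (hb : ∀ i ∈ s, 0 ≤ b i) :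
    Tendsto (fun t => sInf ((fun i => a i + t * b i) '' s)) (𝓝[>] 0) (𝓝 (sInf (a '' s))) := by
  have le_member : ∀ t, 0 ≤ t → ∀ i ∈ s, sInf (a '' s) ≤ a i + t * b i := fun t ht i hi =>
    (csInf_le ha ⟨i, hi, rfl⟩).trans (le_add_of_nonneg_right (mul_nonneg ht (hb i hi)))
  have lower : ∀ t, 0 ≤ t → sInf (a '' s) ≤ sInf ((fun i => a i + t * b i) '' s) :=
    fun t ht => le_csInf (hs.image _) (Set.forall_mem_image.2 (le_member t ht))
  rw [tendsto_order]
  refine ⟨fun c hc => ?_, fun c hc => ?_⟩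
  · filter_upwards [self_mem_nhdsWithin] with t ht using hc.trans_le (lower t ht.le)
  · obtain ⟨_, ⟨i, hi, rfl⟩, hic⟩ := exists_lt_of_csInf_lt (hs.image a) hc
    have member_tendsto : Tendsto (fun t : ℝ => a i + t * b i) (𝓝[>] 0) (𝓝 (a i)) := by
      have h := (tendsto_id (x := 𝓝 (0 : ℝ))).mul_const (b i) |>.const_add (a i)
      rw [zero_mul, add_zero] at h
      exact h.mono_left nhdsWithin_le_nhds
    filter_upwards [self_mem_nhdsWithin, member_tendsto.eventually (gt_mem_nhds hic)]
      with t ht hit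
    exact (csInf_le ⟨_, Set.forall_mem_image.2 (le_member t ht.le)⟩ ⟨i, hi, rfl⟩).trans_lt hit

theorem stmt4_general {D Haux : Type*} [NormedAddCommGroup D] [InnerProductSpace ℝ D]
    [NormedAddCommGroup Haux] [InnerProductSpace ℝ Haux]
    (E : D →ₗ[ℝ] D →ₗ[ℝ] ℝ)
    (hpos : ∀ u : D, 0 ≤ E u u)
    (domJ : Submodule ℝ D) (J : domJ →ₗ[ℝ] Haux)
    (beta : ℝ) (hbeta : 0 < beta) (u : domJ) :
    Tendsto
      (fun lam : ℝ =>
        sInf {r : ℝ | ∃ v : domJ, J v = J u ∧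
          r = E (v : D) (v : D) + (beta + lam) * ‖(v : D)‖ ^ 2})
      (𝓝[>] (0 : ℝ))
      (𝓝 (sInf {r : ℝ | ∃ v : domJ, J v = J u ∧
          r = E (v : D) (v : D) + beta * ‖(v : D)‖ ^ 2})) := by
  have as_image : ∀ c : ℝ, {r : ℝ | ∃ v : domJ, J v = J u ∧
      r = E (v : D) (v : D) + c * ‖(v : D)‖ ^ 2} =
      (fun v : domJ => E (v : D) (v : D) + beta * ‖(v : D)‖ ^ 2 + (c - beta) * ‖(v : D)‖ ^ 2) ''
        {v | J v = J u} := by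
    intro c
    ext r
    simp only [Set.mem_ofPred_eq, Set.mem_image]
    exact exists_congr fun v => ⟨fun ⟨hv, hr⟩ => ⟨hv, by rw [hr]; ring⟩,
      fun ⟨hv, hr⟩ => ⟨hv, by rw [← hr]; ring⟩⟩
  have energy_nonneg : ∀ v : domJ, 0 ≤ E (v : D) (v : D) + beta * ‖(v : D)‖ ^ 2 := fun v =>
    add_nonneg (hpos v) (mul_nonneg hbeta.le (sq_nonneg _))
  simp only [as_image, add_sub_cancel_left, sub_self, zero_mul, add_zero]
  exact tendsto_sInf_image_add_mul_nhdsGT ⟨u, rfl⟩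
    ⟨0, Set.forall_mem_image.2 fun v _ => energy_nonneg v⟩ fun v _ => sq_nonneg _

/-- consistency: For fixed `β > 0` and every `u ∈ dom J`,
`lim_{lam ↓ 0} Ě_{β+lam}[J u] = Ě_β[J u]`, where
`Ě_lam[J u] = inf { E_lam[v] : v ∈ dom J, J v = J u }` and `E_lam = E + lam‖·‖²`. -/
theorem stmt4 {D Haux : Type*} [NormedAddCommGroup D] [InnerProductSpace ℝ D] [CompleteSpace D]
    [NormedAddCommGroup Haux] [InnerProductSpace ℝ Haux]
    (E : D →ₗ[ℝ] D →ₗ[ℝ] ℝ)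
    (hsymm : ∀ u v : D, E u v = E v u) (hpos : ∀ u : D, 0 ≤ E u u)
    (hEclosed : ∀ u : ℕ → D, (∀ ε > (0 : ℝ), ∃ N, ∀ m ≥ N, ∀ n ≥ N,
        E (u m - u n) (u m - u n) + ‖u m - u n‖ ^ 2 < ε) →
        ∃ x : D, Tendsto (fun n => E (u n - x) (u n - x) + ‖u n - x‖ ^ 2) atTop (𝓝 0))
    (domJ : Submodule ℝ D) (J : domJ →ₗ[ℝ] Haux)
    (hrange : DenseRange J)
    (hJclosed : ∀ (w : ℕ → domJ) (x : D) (y : Haux),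
        Tendsto (fun n => E ((w n : D) - x) ((w n : D) - x) + ‖(w n : D) - x‖ ^ 2) atTop (𝓝 0) →
        Tendsto (fun n => J (w n)) atTop (𝓝 y) →
        ∃ hx : x ∈ domJ, J ⟨x, hx⟩ = y)
    (beta : ℝ) (hbeta : 0 < beta) (u : domJ) :
    Tendsto
      (fun lam : ℝ =>
        sInf {r : ℝ | ∃ v : domJ, J v = J u ∧
          r = E (v : D) (v : D) + (beta + lam) * ‖(v : D)‖ ^ 2})
      (𝓝[>] (0 : ℝ))
      (𝓝 (sInf {r : ℝ | ∃ v : domJ, J v = J u ∧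
          r = E (v : D) (v : D) + beta * ‖(v : D)‖ ^ 2})) :=
  stmt4_general E hpos domJ J beta hbeta u
end

section
/- Assume dom J = H_har^J ⊕ ker J and that (D, E) is a Hilbert space (E defines a complete inner product on D, with dom J ⊆ D and J closed with respect to E). Then the form E_har defined on ran J by E_har[Ju] := E[E_har u] is closed, i.e., if (u_n) in dom J is such that (Ju_n) is E_har-Cauchy and Ju_n → ũ in H_aux, then ũ = Ju for some u ∈ dom J and E_har[Ju_n − Ju] → 0. -/
open Filter Topology RealInnerProductSpace

/-- Assume `dom J = H_har^J ⊕ ker J` and that `(D, E)` is a Hilbert space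
(here the inner product of `D` *is* the form `E`), with `J` closed with respect to `E`.
Then the form `E_har[J u] := E[E_har u]` is closed: if `(u n)` in `dom J` is such that
`(J (u n))` is `E_har`-Cauchy (i.e. `(E_har (u n))` is `E`-Cauchy) and `J (u n) → ũ` in
`Haux`, then `ũ = J w` for some `w ∈ dom J` and `E_har[J (u n) − J w] → 0`. -/
theorem stmt6 {D Haux : Type*} [NormedAddCommGroup D] [InnerProductSpace ℝ D] [CompleteSpace D]
    [NormedAddCommGroup Haux] [InnerProductSpace ℝ Haux]
    (domJ : Submodule ℝ D) (J : domJ →ₗ[ℝ] Haux)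
    (hJclosed : IsClosed {p : D × Haux | ∃ h : p.1 ∈ domJ, J ⟨p.1, h⟩ = p.2})
    (Ehar : domJ →ₗ[ℝ] domJ)
    (hhar : ∀ u v : domJ, J v = 0 → ⟪(↑(Ehar u) : D), (↑v : D)⟫ = 0)
    (hker : ∀ u : domJ, J (u - Ehar u) = 0)
    (u : ℕ → domJ) (utilde : Haux)
    (hcauchy : CauchySeq fun n => (↑(Ehar (u n)) : D))
    (hconv : Tendsto (fun n => J (u n)) atTop (𝓝 utilde)) :
    ∃ w : domJ, J w = utilde ∧
      Tendsto (fun n => (↑(Ehar (u n)) : D)) atTop (𝓝 (↑(Ehar w) : D)) := by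
  obtain ⟨x, hx⟩ := cauchySeq_tendsto_of_complete hcauchy
  have hJE : ∀ n, J (Ehar (u n)) = J (u n) := by
    intro n
    have := hker (u n)
    rw [map_sub, sub_eq_zero] at this
    exact this.symm
  -- the pair sequence lies in the graph
  have hmem : (x, utilde) ∈ {p : D × Haux | ∃ h : p.1 ∈ domJ, J ⟨p.1, h⟩ = p.2} := by
    refine hJclosed.mem_of_tendsto (f := fun n => ((↑(Ehar (u n)) : D), J (u n)))
      (hx.prodMk_nhds hconv) ?_
    filter_upwards with n
    exact ⟨(Ehar (u n)).2, by rw [show (⟨↑(Ehar (u n)), (Ehar (u n)).2⟩ : domJ) = Ehar (u n)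
      from rfl, hJE n]⟩
  obtain ⟨hxmem, hJx⟩ := hmem
  set w : domJ := ⟨x, hxmem⟩ with hw
  -- x is orthogonal to ker J
  have hxorth : ∀ v : domJ, J v = 0 → ⟪x, (↑v : D)⟫ = 0 := by
    intro v hv
    have h1 : Tendsto (fun n => ⟪(↑(Ehar (u n)) : D), (↑v : D)⟫) atTop (𝓝 ⟪x, (↑v : D)⟫) :=
      (Continuous.inner continuous_id continuous_const).continuousAt.tendsto.comp hx
    have h2 : (fun n => ⟪(↑(Ehar (u n)) : D), (↑v : D)⟫) = fun _ => (0 : ℝ) := by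
      funext n; exact hhar (u n) v hv
    rw [h2] at h1
    exact tendsto_nhds_unique h1 tendsto_const_nhds
  -- Ehar w = w
  have hEw : Ehar w = w := by
    set d : domJ := w - Ehar w with hd
    have hJd : J d = 0 := hker w
    have h1 : ⟪(↑(Ehar w) : D), (↑d : D)⟫ = 0 := hhar w d hJd
    have h2 : ⟪x, (↑d : D)⟫ = 0 := hxorth d hJd
    have h4 : ⟪(↑w : D) - (↑(Ehar w) : D), (↑d : D)⟫ = 0 := by
      rw [inner_sub_left, h1, show (↑w : D) = x from rfl, h2, sub_zero]
    have h3 : ⟪(↑d : D), (↑d : D)⟫ = 0 := h4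
    have : (↑d : D) = 0 := by
      have := inner_self_eq_zero.mp h3
      exact this
    have hd0 : d = 0 := Subtype.ext this
    have := sub_eq_zero.mp (hd ▸ hd0)
    exact this.symm
  refine ⟨w, hJx, ?_⟩
  rw [hEw]
  exact hx
end

section
/- Assume ker J is dense in H, H_har^J ∩ ker J = {0}, and L_D is surjective. For u ∈ dom J and λ > 0 set v_λ := λ L_D^{-1} P_λ u + P_λ u. Then v_λ ∈ H_har^J, J v_λ = Ju, and v_λ is independent of λ. Moreover dom J = H_har^J ⊕ ker J and E_har u = v_1. -/
open Filter Topology RealInnerProductSpace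

/-- Assume `ker J` dense in `H`, `H_har^J ∩ ker J = {0}` and that `L_D`
(the operator of the form `E` restricted to `ker J`) is surjective (with right inverse
`Linv`).  For `u ∈ dom J` and `lam > 0` put `v_lam := lam • L_D⁻¹ (P_lam u) + P_lam u`,
where `P_lam u` is the `E_lam`-orthogonal projection of `u` onto `(ker J)^{⊥_{E_lam}}`.
Then `v_lam ∈ H_har^J`, `J v_lam = J u`, `v_lam` does not depend on `lam`; moreover
`dom J = H_har^J ⊕ ker J` and `E_har u = v_1`. -/
theorem stmt8 {H Haux : Type*} [NormedAddCommGroup H] [InnerProductSpace ℝ H] [CompleteSpace H]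
    [NormedAddCommGroup Haux] [InnerProductSpace ℝ Haux]
    (E : H →ₗ[ℝ] H →ₗ[ℝ] ℝ)
    (hsymm : ∀ u v : H, E u v = E v u) (hpos : ∀ u : H, 0 ≤ E u u)
    (domJ : Submodule ℝ H) (J : domJ →ₗ[ℝ] Haux)
    (hkerdense : Dense {v : H | ∃ h : v ∈ domJ, J ⟨v, h⟩ = 0})
    (htriv : ∀ u : domJ, J u = 0 → (∀ v : domJ, J v = 0 → E (↑u) (↑v) = 0) → u = 0)
    (domL : Submodule ℝ H) (L : domL →ₗ[ℝ] H)
    (hdomL : ∀ u : domL, ∃ h : (↑u : H) ∈ domJ, J ⟨↑u, h⟩ = 0)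
    (hrep : ∀ (u : domL) (v : domJ), J v = 0 → E (↑u) (↑v) = ⟪L u, (↑v : H)⟫)
    (Linv : H → domL) (hLinv : ∀ f : H, L (Linv f) = f)
    (P : ℝ → domJ → domJ)
    (hPker : ∀ lam > (0 : ℝ), ∀ u : domJ, J (u - P lam u) = 0)
    (hPperp : ∀ lam > (0 : ℝ), ∀ u v : domJ, J v = 0 →
        E (↑(P lam u)) (↑v) + lam * ⟪(↑(P lam u) : H), (↑v : H)⟫ = 0) :
    (∀ lam > (0 : ℝ), ∀ u : domJ,
        (∃ hm : lam • (↑(Linv ↑(P lam u)) : H) + ↑(P lam u) ∈ domJ,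
          J ⟨lam • (↑(Linv ↑(P lam u)) : H) + ↑(P lam u), hm⟩ = J u) ∧
        (∀ v : domJ, J v = 0 →
          E (lam • (↑(Linv ↑(P lam u)) : H) + ↑(P lam u)) (↑v) = 0)) ∧
    (∀ lam > (0 : ℝ), ∀ mu > (0 : ℝ), ∀ u : domJ,
        lam • (↑(Linv ↑(P lam u)) : H) + ↑(P lam u)
          = mu • (↑(Linv ↑(P mu u)) : H) + ↑(P mu u)) ∧
    (∀ u : domJ, ∃ a k : H,
        (∃ ha : a ∈ domJ, ∀ v : domJ, J v = 0 → E a (↑v) = 0) ∧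
        (∃ hk : k ∈ domJ, J ⟨k, hk⟩ = 0) ∧ (↑u : H) = a + k) ∧
    (∀ u : domJ, ∀ hm : (1 : ℝ) • (↑(Linv ↑(P 1 u)) : H) + ↑(P 1 u) ∈ domJ,
        J (u - ⟨(1 : ℝ) • (↑(Linv ↑(P 1 u)) : H) + ↑(P 1 u), hm⟩) = 0) := by
  classical
  -- the harmonic candidate as an element of domJ
  set d : ℝ → domJ → domJ := fun lam u =>
    lam • (⟨↑(Linv ↑(P lam u)), (hdomL (Linv ↑(P lam u))).1⟩ : domJ) + P lam u with hd
  have hdco : ∀ lam u, (↑(d lam u) : H) = lam • (↑(Linv ↑(P lam u)) : H) + ↑(P lam u) := by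
    intro lam u; simp [hd]
  have hJP : ∀ lam > (0:ℝ), ∀ u : domJ, J (P lam u) = J u := by
    intro lam hlam u
    have := hPker lam hlam u
    rw [map_sub, sub_eq_zero] at this
    exact this.symm
  have hJd : ∀ lam > (0:ℝ), ∀ u : domJ, J (d lam u) = J u := by
    intro lam hlam u
    show J (lam • (⟨↑(Linv ↑(P lam u)), (hdomL (Linv ↑(P lam u))).1⟩ : domJ) + P lam u) = J u
    rw [map_add, map_smul, (hdomL (Linv ↑(P lam u))).2, smul_zero, zero_add, hJP lam hlam u]
  have hharm : ∀ lam > (0:ℝ), ∀ u v : domJ, J v = 0 → E (↑(d lam u)) (↑v) = 0 := by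
    intro lam hlam u v hv
    rw [hdco]
    have h1 : E (↑(Linv ↑(P lam u))) (↑v) = ⟪(↑(P lam u) : H), (↑v : H)⟫ := by
      rw [hrep _ v hv, hLinv]
    have h2 := hPperp lam hlam u v hv
    simp only [map_add, map_smul, LinearMap.add_apply, LinearMap.smul_apply, smul_eq_mul, h1]
    linarith
  have hind : ∀ lam > (0:ℝ), ∀ mu > (0:ℝ), ∀ u : domJ, d lam u = d mu u := by
    intro lam hlam mu hmu u
    have h0 : d lam u - d mu u = 0 := by
      apply htriv
      · rw [map_sub, hJd lam hlam u, hJd mu hmu u, sub_self]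
      · intro v hv
        push_cast [map_sub]
        simp only [LinearMap.sub_apply]
        rw [hharm lam hlam u v hv, hharm mu hmu u v hv, sub_self]
    exact sub_eq_zero.mp h0
  refine ⟨?_, ?_, ?_, ?_⟩
  · intro lam hlam u
    constructor
    · refine ⟨hdco lam u ▸ (d lam u).2, ?_⟩
      have heq : (⟨lam • (↑(Linv ↑(P lam u)) : H) + ↑(P lam u), hdco lam u ▸ (d lam u).2⟩ : domJ)
          = d lam u := Subtype.ext (hdco lam u).symm
      rw [heq, hJd lam hlam u]
    · intro v hv
      have := hharm lam hlam u v hv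
      rwa [hdco] at this
  · intro lam hlam mu hmu u
    have := hind lam hlam mu hmu u
    calc lam • (↑(Linv ↑(P lam u)) : H) + ↑(P lam u) = ↑(d lam u) := (hdco lam u).symm
    _ = ↑(d mu u) := by rw [this]
    _ = mu • (↑(Linv ↑(P mu u)) : H) + ↑(P mu u) := hdco mu u
  · intro u
    refine ⟨↑(d 1 u), ↑(u - d 1 u), ⟨(d 1 u).2, fun v hv => hharm 1 one_pos u v hv⟩, ⟨(u - d 1 u).2, ?_⟩, by push_cast; abel⟩
    have h0 : J (u - d 1 u) = 0 := by rw [map_sub, hJd 1 one_pos u, sub_self]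
    exact h0
  · intro u hm
    have heq : (⟨(1 : ℝ) • (↑(Linv ↑(P 1 u)) : H) + ↑(P 1 u), hm⟩ : domJ) = d 1 u :=
      Subtype.ext (by rw [hdco])
    rw [heq, map_sub, hJd 1 one_pos u, sub_self]
end

section
/- Let E be a Dirichlet form with domain D in L²(X,m), J: dom J = D ∩ L²(X,μ) → L²(X,μ) the inclusion (restriction) map, and for λ>0 let Ě_λ[Ju] := inf{ E_λ[v] : v ∈ dom J, Jv = Ju }. Then the unit contraction operates on Ě_λ: for every u ∈ dom J, (0 ∨ Ju) ∧ 1 ∈ ran J and Ě_λ[(0 ∨ Ju) ∧ 1] ≤ Ě_λ[Ju]. -/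
open MeasureTheory

/-! Every competitor `v` for `Ě_λ[J u]` is mapped by the unit contraction to a competitor for
`Ě_λ[(0 ∨ J u) ∧ 1]`, because the contraction preserves `μ`-a.e. equality, and it does not increase
`E_λ`. Since `E_λ ≥ 0`, the infimum on the left is over a set bounded below, so it is at most every
value in the right-hand set. -/

theorem csInf_le_csInf_of_forall_exists_le {α : Type*} [ConditionallyCompleteLattice α]
    {s t : Set α} (hs : BddBelow s) (ht : t.Nonempty) (h : ∀ b ∈ t, ∃ a ∈ s, a ≤ b) :
    sInf s ≤ sInf t :=
  le_csInf ht fun _ hb =>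
    let ⟨_, ha, hab⟩ := h _ hb
    csInf_le_of_le hs ha hab

theorem MeasureTheory.MemLp.unitContraction {X : Type*} [MeasurableSpace X] {μ : Measure X} {p : ENNReal}
    {v : X → ℝ} (hv : MemLp v p μ) : MemLp (fun x => min (max (v x) 0) 1) p μ := by
  refine hv.of_le ?_ (Filter.Eventually.of_forall fun x => ?_)
  · exact ((continuous_id.max continuous_const).min continuous_const).comp_aestronglyMeasurable
      hv.aestronglyMeasurable
  · simp only [Real.norm_eq_abs]
    rcases le_or_gt (v x) 0 with h | h
    · simp [max_eq_right h]
    · rw [max_eq_left h.le, abs_of_nonneg (le_min h.le zero_le_one), abs_of_pos h]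
      exact min_le_left _ _

/-- Let `E` be a Dirichlet form with domain `D ⊆ L²(X,m)` (so the unit
contraction `v ↦ (0 ∨ v) ∧ 1` operates on `E_λ`), `J` the restriction map on
`dom J = D ∩ L²(X,μ)`, and `Ě_λ[J u] := inf { E_λ[v] : v ∈ dom J, J v = J u }`.  Then
the unit contraction operates on `Ě_λ`: `(0 ∨ J u) ∧ 1 ∈ ran J` and
`Ě_λ[(0 ∨ J u) ∧ 1] ≤ Ě_λ[J u]` for every `u ∈ dom J`. -/
theorem stmt16 {X : Type*} [MeasurableSpace X] (m μ : Measure X)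
    (D : Set (X → ℝ)) (E : (X → ℝ) → ℝ)
    (hpos : ∀ v ∈ D, 0 ≤ E v)
    (hDstable : ∀ v ∈ D, (fun x => min (max (v x) 0) 1) ∈ D)
    (lam : ℝ) (hlam : 0 < lam)
    (hcontract : ∀ v ∈ D,
        E (fun x => min (max (v x) 0) 1)
            + lam * ∫ x, (min (max (v x) 0) 1) ^ 2 ∂m
          ≤ E v + lam * ∫ x, v x ^ 2 ∂m)
    (u : X → ℝ) (hu : u ∈ D) (huμ : MemLp u 2 μ) :
    ((fun x => min (max (u x) 0) 1) ∈ D ∧ MemLp (fun x => min (max (u x) 0) 1) 2 μ) ∧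
    sInf {r : ℝ | ∃ v, v ∈ D ∧ MemLp v 2 μ ∧
          (v =ᵐ[μ] fun x => min (max (u x) 0) 1) ∧ r = E v + lam * ∫ x, v x ^ 2 ∂m}
      ≤ sInf {r : ℝ | ∃ v, v ∈ D ∧ MemLp v 2 μ ∧
          v =ᵐ[μ] u ∧ r = E v + lam * ∫ x, v x ^ 2 ∂m} := by
  refine ⟨⟨hDstable u hu, huμ.unitContraction⟩, ?_⟩
  have energy_nonneg : ∀ v ∈ D, 0 ≤ E v + lam * ∫ x, v x ^ 2 ∂m := fun v hv =>
    add_nonneg (hpos v hv) (mul_nonneg hlam.le (integral_nonneg fun _ => sq_nonneg _))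
  refine csInf_le_csInf_of_forall_exists_le ⟨0, ?_⟩ ⟨_, u, hu, huμ, .rfl, rfl⟩ ?_
  · rintro _ ⟨v, hv, -, -, rfl⟩
    exact energy_nonneg v hv
  · rintro _ ⟨v, hv, hvμ, hvu, rfl⟩
    exact ⟨_, ⟨_, hDstable v hv, hvμ.unitContraction,
      hvu.fun_comp (fun t => min (max t 0) 1), rfl⟩, hcontract v hv⟩
end

section
/- Assume (A.1): c^{-1}E[u] ≤ E^n[u] ≤ cE[u] for all u ∈ D and n ∈ ℕ∪{∞}, and (A.2): J₁ is continuous. Suppose (E^n) Mosco-converges to E^∞ and additionally E^n[v] → E^∞[v] for every v ∈ ran K^∞, where K^n = (H^n+1)^{-1} and H^n is the operator associated with E^n. Then for every u ∈ L²(X,m), (E^n)₁[K^n u − K^∞ u] → 0 and consequently J₁^n K^n u → J₁^∞ K^∞ u in L²(X,μ), i.e., assumption (A.3) holds. -/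
open Filter Topology RealInnerProductSpace
open scoped Classical

/-- The extension of a quadratic form `Q` with domain `D` by `+∞` outside `D`. -/
noncomputable def extForm {H : Type*} [NormedAddCommGroup H] [InnerProductSpace ℝ H]
    (D : Set H) (Q : H → ℝ) : H → ENNReal :=
  fun u => if u ∈ D then ENNReal.ofReal (Q u) else ⊤

/-- Mosco convergence of a sequence of (extended) positive quadratic forms. -/
def MoscoConv {H : Type*} [NormedAddCommGroup H] [InnerProductSpace ℝ H]
    (Qn : ℕ → H → ENNReal) (Q : H → ENNReal) : Prop :=
  (∀ (u : ℕ → H) (v : H),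
      (∀ w : H, Tendsto (fun n => ⟪u n, w⟫) atTop (𝓝 ⟪v, w⟫)) →
      Q v ≤ Filter.liminf (fun n => Qn n (u n)) atTop) ∧
  (∀ v : H, ∃ u : ℕ → H, Tendsto u atTop (𝓝 v) ∧
      Filter.limsup (fun n => Qn n (u n)) atTop ≤ Q v)


/-!
Write `w k = K k u`, `w = K ⊤ u` and `E¹ₖ[z] = B k z z + ‖z‖²`. The resolvent equations give
`E¹ₖ[w k - w] = ⟪u, w k⟫ - 2 ⟪u, w⟫ + E¹ₖ[w]`, and `E¹ₖ[w] → E¹_∞[w] = ⟪u, w⟫` by assumption, so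
everything reduces to `⟪u, w k⟫ → ⟪u, w⟫`. Nonnegativity of the left side gives the lower bound.
For the upper bound pass to a subsequence along which `w k` (bounded by `‖u‖`) converges weakly
to some `v`: the Mosco liminf inequality gives `v ∈ D` and `E¹_∞[v] ≤ lim ⟪u, w k⟫ = ⟪u, v⟫`,
while `w` minimizes `E¹_∞[z] - 2 ⟪u, z⟫`, which forces `⟪u, v⟫ ≤ ⟪u, w⟫`. Finally (A.1) and (A.2)
bound `‖J (w k - w)‖` by a multiple of `E¹ₖ[w k - w] ^ (1/2)`.
-/

section WeakConvergence

variable {H : Type*} [NormedAddCommGroup H] [InnerProductSpace ℝ H]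

def WeaklyTendsto (x : ℕ → H) (v : H) : Prop :=
  ∀ w : H, Tendsto (fun j => ⟪x j, w⟫) atTop (𝓝 ⟪v, w⟫)

/-- Sequential Banach–Alaoglu, applied in the separable closed span of the sequence. -/
theorem exists_strictMono_weaklyTendsto [CompleteSpace H] (x : ℕ → H) {R : ℝ}
    (hx : ∀ n, ‖x n‖ ≤ R) : ∃ φ : ℕ → ℕ, StrictMono φ ∧ ∃ v : H, WeaklyTendsto (x ∘ φ) v := by
  let S := Submodule.span ℝ (Set.range x)
  let V := S.topologicalClosure
  have : TopologicalSpace.SeparableSpace V :=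
    (Set.countable_range x).isSeparable.span.closure.separableSpace
  have : CompleteSpace V := S.isClosed_topologicalClosure.completeSpace_coe
  have hxV : ∀ n, x n ∈ V := fun n => S.le_topologicalClosure (Submodule.subset_span ⟨n, rfl⟩)
  let ℓ : ℕ → StrongDual ℝ V := fun n => InnerProductSpace.toDual ℝ V ⟨x n, hxV n⟩
  obtain ⟨ℓ', -, φ, hφ, hlim⟩ := WeakDual.isSeqCompact_closedBall ℝ V 0 R
    (x := fun n => StrongDual.toWeakDual (ℓ n)) fun n => by simpa [ℓ] using hx n
  refine ⟨φ, hφ, ((InnerProductSpace.toDual ℝ V).symm (WeakDual.toStrongDual ℓ') : H),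
    fun w => ?_⟩
  rw [← V.inner_orthogonalProjectionOnto_eq_of_mem_left, InnerProductSpace.toDual_symm_apply]
  have := ((WeakDual.eval_continuous (V.orthogonalProjectionOnto w)).tendsto ℓ').comp hlim
  simpa [ℓ, Function.comp_def, InnerProductSpace.toDual_apply_apply] using this

theorem WeaklyTendsto.norm_sq_le {x : ℕ → H} {v : H} (hxv : WeaklyTendsto x v) {N : ℝ}
    (hN : Tendsto (fun j => ‖x j‖ ^ 2) atTop (𝓝 N)) : ‖v‖ ^ 2 ≤ N := by
  have hinner : Tendsto (fun j => ⟪x j, v⟫) atTop (𝓝 (‖v‖ ^ 2)) := by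
    simpa only [real_inner_self_eq_norm_sq] using hxv v
  have hbound : ∀ j, ⟪x j, v⟫ ≤ (‖x j‖ ^ 2 + ‖v‖ ^ 2) / 2 := fun j => by
    nlinarith [real_inner_le_norm (x j) v, sq_nonneg (‖x j‖ - ‖v‖)]
  have := le_of_tendsto_of_tendsto' hinner ((hN.add_const _).div_const 2) hbound
  linarith

/-- Spread `x` over all indices by holding `x j` on the block `[ψ j, ψ (j + 1))`. -/
theorem MoscoConv.le_liminf_comp {Qn : ℕ → H → ENNReal} {Q : H → ENNReal}
    (h : MoscoConv Qn Q) {ψ : ℕ → ℕ} (hψ : StrictMono ψ) {x : ℕ → H} {v : H}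
    (hxv : WeaklyTendsto x v) : Q v ≤ liminf (fun j => Qn (ψ j) (x j)) atTop := by
  let g : ℕ → ℕ := fun n => Nat.findGreatest (fun j => ψ j ≤ n) n
  have hg : Tendsto g atTop atTop := tendsto_atTop.2 fun b => by
    filter_upwards [eventually_ge_atTop (ψ b)] with n hn
    exact Nat.le_findGreatest (hψ.le_apply.trans hn) hn
  have hgψ : ∀ j, g (ψ j) = j := fun j => Nat.findGreatest_eq_iff.2
    ⟨hψ.le_apply, fun _ => le_rfl, fun _ hjn _ => not_le.2 (hψ hjn)⟩
  calc Q v ≤ liminf (fun n => Qn n (x (g n))) atTop := h.1 _ v fun w => (hxv w).comp hg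
    _ ≤ liminf ((fun n => Qn n (x (g n))) ∘ ψ) atTop := by
      rw [liminf_comp]
      exact liminf_le_liminf_of_le hψ.tendsto_atTop
    _ = liminf (fun j => Qn (ψ j) (x j)) atTop := by simp only [Function.comp_def, hgψ]

theorem MoscoConv.mem_and_le_of_tendsto {D : Set H} {Q : ℕ → H → ℝ} {Q' : H → ℝ}
    (h : MoscoConv (fun k => extForm D (Q k)) (extForm D Q')) {ψ : ℕ → ℕ} (hψ : StrictMono ψ)
    {x : ℕ → H} {v : H} (hxD : ∀ j, x j ∈ D) (hxv : WeaklyTendsto x v) {a : ℝ} (ha : 0 ≤ a)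
    (hQ : Tendsto (fun j => Q (ψ j) (x j)) atTop (𝓝 a)) : v ∈ D ∧ Q' v ≤ a := by
  have hle := h.le_liminf_comp hψ hxv
  simp only [extForm, if_pos (hxD _)] at hle
  rw [(ENNReal.tendsto_ofReal hQ).liminf_eq] at hle
  by_cases hv : v ∈ D
  · rw [if_pos hv, ENNReal.ofReal_le_ofReal_iff ha] at hle
    exact ⟨hv, hle⟩
  · rw [if_neg hv, top_le_iff] at hle
    exact absurd hle ENNReal.ofReal_ne_top

end WeakConvergence

section Resolvent

variable {H : Type*} [NormedAddCommGroup H] [InnerProductSpace ℝ H]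
  {D : Submodule ℝ H} {b : H →ₗ[ℝ] H →ₗ[ℝ] ℝ} {u w : H}

/-- `w = (A + 1)⁻¹ u` in weak form, `A` being the self-adjoint operator of the form `b` on `D`. -/
def IsResolvent (D : Submodule ℝ H) (b : H →ₗ[ℝ] H →ₗ[ℝ] ℝ) (u w : H) : Prop :=
  w ∈ D ∧ ∀ v ∈ D, b w v + ⟪w, v⟫ = ⟪u, v⟫

theorem IsResolvent.energy_eq (hw : IsResolvent D b u w) : b w w + ‖w‖ ^ 2 = ⟪u, w⟫ := by
  rw [← real_inner_self_eq_norm_sq]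
  exact hw.2 w hw.1

theorem IsResolvent.norm_le (hw : IsResolvent D b u w) (hpos : ∀ v ∈ D, 0 ≤ b v v) :
    ‖w‖ ≤ ‖u‖ := by
  have h : ‖w‖ ^ 2 ≤ ‖u‖ * ‖w‖ := by
    linarith [hw.energy_eq, hpos w hw.1, real_inner_le_norm u w]
  nlinarith [norm_nonneg u, norm_nonneg w]

theorem IsResolvent.energy_sub_eq (hw : IsResolvent D b u w) (hsymm : ∀ x y, b x y = b y x)
    {z : H} (hz : z ∈ D) :
    b (w - z) (w - z) + ‖w - z‖ ^ 2 = ⟪u, w⟫ - 2 * ⟪u, z⟫ + (b z z + ‖z‖ ^ 2) := by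
  have hwz := hw.2 z hz
  simp only [map_sub, LinearMap.sub_apply, norm_sub_sq_real, hsymm z w]
  linarith [hw.energy_eq]

/-- `w` minimizes `z ↦ b z z + ‖z‖ ^ 2 - 2 ⟪u, z⟫` over `D`. -/
theorem IsResolvent.two_inner_sub_le (hw : IsResolvent D b u w) (hsymm : ∀ x y, b x y = b y x)
    (hpos : ∀ v ∈ D, 0 ≤ b v v) {z : H} (hz : z ∈ D) :
    2 * ⟪u, z⟫ - ⟪u, w⟫ ≤ b z z + ‖z‖ ^ 2 := by
  linarith [hw.energy_sub_eq hsymm hz, hpos _ (D.sub_mem hw.1 hz), sq_nonneg ‖w - z‖]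

end Resolvent

section Convergence

variable {H : Type*} [NormedAddCommGroup H] [InnerProductSpace ℝ H]
  {D : Submodule ℝ H} {Q : ℕ → H →ₗ[ℝ] H →ₗ[ℝ] ℝ} {b : H →ₗ[ℝ] H →ₗ[ℝ] ℝ}
  {u : H} {w : ℕ → H} {w' : H}

theorem le_inner_of_weaklyTendsto
    (hMosco : MoscoConv (fun k => extForm (D : Set H) fun z => Q k z z)
      (extForm (D : Set H) fun z => b z z))
    (hQpos : ∀ k, ∀ v ∈ D, 0 ≤ Q k v v) (hsymm : ∀ x y, b x y = b y x)
    (hpos : ∀ v ∈ D, 0 ≤ b v v) (hw : ∀ k, IsResolvent D (Q k) u (w k))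
    (hw' : IsResolvent D b u w') {ψ : ℕ → ℕ} (hψ : StrictMono ψ) {v : H}
    (hv : WeaklyTendsto (w ∘ ψ) v) {L N : ℝ}
    (hL : Tendsto (fun j => ⟪u, w (ψ j)⟫) atTop (𝓝 L))
    (hN : Tendsto (fun j => ‖w (ψ j)‖ ^ 2) atTop (𝓝 N)) : L ≤ ⟪u, w'⟫ := by
  have hQ : Tendsto (fun j => Q (ψ j) (w (ψ j)) (w (ψ j))) atTop (𝓝 (L - N)) :=
    (hL.sub hN).congr fun j => by linarith [(hw (ψ j)).energy_eq]
  have hLN : 0 ≤ L - N := ge_of_tendsto' hQ fun j => hQpos _ _ (hw _).1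
  obtain ⟨hvD, hbv⟩ := hMosco.mem_and_le_of_tendsto (Q := fun k z => Q k z z) hψ
    (fun j => (hw (ψ j)).1) hv hLN hQ
  have huv : ⟪u, v⟫ = L :=
    tendsto_nhds_unique (by simpa only [real_inner_comm u, Function.comp_apply] using hv u) hL
  linarith [hw'.two_inner_sub_le hsymm hpos hvD, hv.norm_sq_le hN]

variable [CompleteSpace H]

theorem tendsto_inner_resolvent
    (hMosco : MoscoConv (fun k => extForm (D : Set H) fun z => Q k z z)
      (extForm (D : Set H) fun z => b z z))
    (hQsymm : ∀ k x y, Q k x y = Q k y x) (hQpos : ∀ k, ∀ v ∈ D, 0 ≤ Q k v v)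
    (hsymm : ∀ x y, b x y = b y x) (hpos : ∀ v ∈ D, 0 ≤ b v v)
    (hw : ∀ k, IsResolvent D (Q k) u (w k)) (hw' : IsResolvent D b u w')
    (hran : Tendsto (fun k => Q k w' w') atTop (𝓝 (b w' w'))) :
    Tendsto (fun k => ⟪u, w k⟫) atTop (𝓝 ⟪u, w'⟫) := by
  have hcf : Tendsto (fun k => Q k w' w' + ‖w'‖ ^ 2) atTop (𝓝 ⟪u, w'⟫) := by
    rw [← hw'.energy_eq]
    exact hran.add_const _
  have hlow : ∀ k, 2 * ⟪u, w'⟫ - (Q k w' w' + ‖w'‖ ^ 2) ≤ ⟪u, w k⟫ := fun k => by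
    linarith [(hw k).two_inner_sub_le (hQsymm k) (hQpos k) hw'.1]
  refine tendsto_of_subseq_tendsto fun ns hns => ?_
  obtain ⟨m, -, hm⟩ := strictMono_subseq_of_tendsto_atTop hns
  obtain ⟨φ, hφ, v, hv⟩ := exists_strictMono_weaklyTendsto (w ∘ ns ∘ m)
    fun j => (hw _).norm_le (hQpos _)
  have hbdd : ∀ j, (⟪u, w (ns (m (φ j)))⟫, ‖w (ns (m (φ j)))‖ ^ 2) ∈
      Metric.closedBall (0 : ℝ × ℝ) (‖u‖ ^ 2) := fun j => by
    have hnorm := (hw (ns (m (φ j)))).norm_le (hQpos _)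
    have hinner := abs_real_inner_le_norm u (w (ns (m (φ j))))
    simp only [mem_closedBall_zero_iff, Prod.norm_def, Real.norm_eq_abs, abs_pow, abs_norm,
      sup_le_iff]
    constructor <;> nlinarith [norm_nonneg u, norm_nonneg (w (ns (m (φ j))))]
  obtain ⟨⟨L, N⟩, -, χ, hχ, hLN⟩ := tendsto_subseq_of_bounded Metric.isBounded_closedBall hbdd
  have hψ : StrictMono (ns ∘ m ∘ φ ∘ χ) := hm.comp (hφ.comp hχ)
  have hle := le_inner_of_weaklyTendsto hMosco hQpos hsymm hpos hw hw' hψ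
    (fun z => (hv z).comp hχ.tendsto_atTop) hLN.fst_nhds hLN.snd_nhds
  have hge : 2 * ⟪u, w'⟫ - ⟪u, w'⟫ ≤ L := le_of_tendsto_of_tendsto'
    (tendsto_const_nhds.sub (hcf.comp hψ.tendsto_atTop)) hLN.fst_nhds fun j => hlow _
  refine ⟨m ∘ φ ∘ χ, ?_⟩
  rw [← show L = ⟪u, w'⟫ by linarith]
  exact hLN.fst_nhds

theorem tendsto_energy_sub_resolvent
    (hMosco : MoscoConv (fun k => extForm (D : Set H) fun z => Q k z z)
      (extForm (D : Set H) fun z => b z z))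
    (hQsymm : ∀ k x y, Q k x y = Q k y x) (hQpos : ∀ k, ∀ v ∈ D, 0 ≤ Q k v v)
    (hsymm : ∀ x y, b x y = b y x) (hpos : ∀ v ∈ D, 0 ≤ b v v)
    (hw : ∀ k, IsResolvent D (Q k) u (w k)) (hw' : IsResolvent D b u w')
    (hran : Tendsto (fun k => Q k w' w') atTop (𝓝 (b w' w'))) :
    Tendsto (fun k => Q k (w k - w') (w k - w') + ‖w k - w'‖ ^ 2) atTop (𝓝 0) := by
  have hcf : Tendsto (fun k => Q k w' w' + ‖w'‖ ^ 2) atTop (𝓝 ⟪u, w'⟫) := by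
    rw [← hw'.energy_eq]
    exact hran.add_const _
  have h := ((tendsto_inner_resolvent hMosco hQsymm hQpos hsymm hpos hw hw' hran).sub_const
    (2 * ⟪u, w'⟫)).add hcf
  rw [show ⟪u, w'⟫ - 2 * ⟪u, w'⟫ + ⟪u, w'⟫ = 0 by ring] at h
  exact h.congr fun k => ((hw k).energy_sub_eq (hQsymm k) hw'.1).symm

end Convergence

theorem tendsto_map_zero_of_energy_tendsto_zero {H Haux : Type*} [NormedAddCommGroup H]
    [InnerProductSpace ℝ H] [NormedAddCommGroup Haux] [Module ℝ Haux] {D : Submodule ℝ H}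
    {Q : ℕ → H →ₗ[ℝ] H →ₗ[ℝ] ℝ} {Bbase : H →ₗ[ℝ] H →ₗ[ℝ] ℝ} {c : ℝ} (hc : 0 < c)
    (hQpos : ∀ k, ∀ v ∈ D, 0 ≤ Q k v v) (hQ : ∀ k, ∀ v ∈ D, c⁻¹ * Bbase v v ≤ Q k v v)
    {J : H →ₗ[ℝ] Haux} {M : ℝ} (hJ : ∀ v ∈ D, ‖J v‖ ≤ M * Real.sqrt (Bbase v v + ‖v‖ ^ 2))
    {d : ℕ → H} (hd : ∀ k, d k ∈ D)
    (h : Tendsto (fun k => Q k (d k) (d k) + ‖d k‖ ^ 2) atTop (𝓝 0)) :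
    Tendsto (fun k => J (d k)) atTop (𝓝 0) := by
  have hbound : ∀ k, ‖J (d k)‖ ≤ |M| * Real.sqrt (max c 1 * (Q k (d k) (d k) + ‖d k‖ ^ 2)) := by
    intro k
    have hbase : Bbase (d k) (d k) ≤ c * Q k (d k) (d k) := by
      have := mul_le_mul_of_nonneg_left (hQ k _ (hd k)) hc.le
      rwa [mul_inv_cancel_left₀ hc.ne'] at this
    have hle : Bbase (d k) (d k) + ‖d k‖ ^ 2 ≤ max c 1 * (Q k (d k) (d k) + ‖d k‖ ^ 2) := by
      nlinarith [le_max_left c 1, le_max_right c 1, hQpos k _ (hd k), sq_nonneg ‖d k‖]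
    calc ‖J (d k)‖ ≤ M * Real.sqrt (Bbase (d k) (d k) + ‖d k‖ ^ 2) := hJ _ (hd k)
      _ ≤ |M| * Real.sqrt (Bbase (d k) (d k) + ‖d k‖ ^ 2) := by gcongr; exact le_abs_self M
      _ ≤ |M| * Real.sqrt (max c 1 * (Q k (d k) (d k) + ‖d k‖ ^ 2)) := by gcongr
  refine squeeze_zero_norm hbound ?_
  simpa using ((h.const_mul (max c 1)).sqrt).const_mul |M|

/-- Assume (A.1) `c⁻¹ E[u] ≤ E^n[u] ≤ c E[u]` on the common domain `D`
and (A.2) continuity of `J₁`.  If `(E^n)` Mosco-converges to `E^∞` and additionally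
`E^n[v] → E^∞[v]` for every `v ∈ ran K^∞` (where `K^n = (H^n+1)⁻¹` is characterized by
`K^n u ∈ D` and `(E^n)₁(K^n u, v) = ⟪u, v⟫` for `v ∈ D`), then for every `u`,
`(E^n)₁[K^n u − K^∞ u] → 0` and hence `J₁^n K^n u → J₁^∞ K^∞ u`, i.e. (A.3) holds. -/
theorem stmt19 {H Haux : Type*} [NormedAddCommGroup H] [InnerProductSpace ℝ H]
    [CompleteSpace H] [NormedAddCommGroup Haux] [InnerProductSpace ℝ Haux]
    (D : Submodule ℝ H)
    (B : ℕ∞ → H →ₗ[ℝ] H →ₗ[ℝ] ℝ) (Bbase : H →ₗ[ℝ] H →ₗ[ℝ] ℝ)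
    (hsymm : ∀ (n : ℕ∞) (u v : H), B n u v = B n v u)
    (hpos : ∀ (n : ℕ∞), ∀ u ∈ D, 0 ≤ B n u u)
    (c : ℝ) (hc : 0 < c)
    (hA1 : ∀ n : ℕ∞, ∀ u ∈ D, c⁻¹ * Bbase u u ≤ B n u u ∧ B n u u ≤ c * Bbase u u)
    (J : H →ₗ[ℝ] Haux) (M : ℝ)
    (hA2 : ∀ u ∈ D, ‖J u‖ ≤ M * Real.sqrt (Bbase u u + ‖u‖ ^ 2))
    (K : ℕ∞ → H →L[ℝ] H)
    (hKD : ∀ (n : ℕ∞) (u : H), K n u ∈ D)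
    (hKrep : ∀ (n : ℕ∞) (u : H), ∀ v ∈ D, B n (K n u) v + ⟪(K n u : H), v⟫ = ⟪u, v⟫)
    (hMosco : MoscoConv (fun k => extForm (D : Set H) fun u => B (k : ℕ∞) u u)
        (extForm (D : Set H) fun u => B ⊤ u u))
    (hran : ∀ u : H,
        Tendsto (fun k : ℕ => B (k : ℕ∞) (K ⊤ u) (K ⊤ u)) atTop (𝓝 (B ⊤ (K ⊤ u) (K ⊤ u)))) :
    ∀ u : H,
      Tendsto (fun k : ℕ =>
          B (k : ℕ∞) (K (k : ℕ∞) u - K ⊤ u) (K (k : ℕ∞) u - K ⊤ u)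
            + ‖K (k : ℕ∞) u - K ⊤ u‖ ^ 2) atTop (𝓝 0) ∧
      Tendsto (fun k : ℕ => J (K (k : ℕ∞) u)) atTop (𝓝 (J (K ⊤ u))) := by
  intro u
  have hres : ∀ n, IsResolvent D (B n) u (K n u) := fun n => ⟨hKD n u, hKrep n u⟩
  have henergy := tendsto_energy_sub_resolvent (Q := fun k => B k) hMosco (fun k => hsymm k)
    (fun k => hpos k) (hsymm ⊤) (hpos ⊤) (fun k => hres k) (hres ⊤) (hran u)
  refine ⟨henergy, tendsto_sub_nhds_zero_iff.1 ?_⟩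
  simpa only [map_sub] using tendsto_map_zero_of_energy_tendsto_zero hc (fun k => hpos k)
    (fun k v hv => (hA1 k v hv).1) hA2 (fun k => D.sub_mem (hKD k u) (hKD ⊤ u)) henergy
end
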